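/- arXiv:2401.02277 — 3 statements merged into one kernel-verified Lean document; each statement's English description precedes it below -/
import Mathlib

section
/- Let 𝔻 be the dual numbers over ℝ. The family (e₀, e₁) with e₀ = 1 + ε and e₁ = 1 − ε is an ℝ-basis of 𝔻, and with respect to this basis both coordinate bilinear forms of dual-number multiplication are non-degenerate; that is, writing x·y = B₀(x,y)·e₀ + B₁(x,y)·e₁, each of the bilinear forms B₀ and B₁ satisfies that B(x,y)=0 for all x implies y=0 and B(x,y)=0 for all y implies x=0. (Thus the dual numbers, which are degenerate with respect to the canonical basis {1, ε}, are non-degenerate with respect to the basis {1+ε, 1−ε}.) -/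
open DualNumber

noncomputable def dualAltEquiv : DualNumber ℝ ≃ₗ[ℝ] (Fin 2 → ℝ) where
  toFun x := ![(x.fst + x.snd) / 2, (x.fst - x.snd) / 2]
  invFun c := TrivSqZeroExt.inl (c 0 + c 1) + (c 0 - c 1) • ε
  map_add' x y := by
    funext i
    fin_cases i <;> simp <;> ring
  map_smul' r x := by
    funext i
    fin_cases i <;> simp <;> ring
  left_inv x := by
    ext <;> simp <;> ring
  right_inv c := by
    funext i
    fin_cases i <;> simp <;> ring

lemma coordB₀ (B₀ B₁ : DualNumber ℝ → DualNumber ℝ → ℝ)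
    (h : ∀ x y : DualNumber ℝ,
      x * y = B₀ x y • (1 + (ε : DualNumber ℝ)) + B₁ x y • (1 - (ε : DualNumber ℝ)))
    (x y : DualNumber ℝ) :
    B₀ x y = (x.fst * y.fst + (x.fst * y.snd + x.snd * y.fst)) / 2 ∧
    B₁ x y = (x.fst * y.fst - (x.fst * y.snd + x.snd * y.fst)) / 2 := by
  have h1 : (x * y).fst = B₀ x y + B₁ x y := by rw [h x y]; simp
  have h2 : (x * y).snd = B₀ x y - B₁ x y := by rw [h x y]; simp; ring
  simp only [TrivSqZeroExt.fst_mul, TrivSqZeroExt.snd_mul, smul_eq_mul, op_smul_eq_mul] at h1 h2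
  constructor <;> linarith [h1, h2]

/-- The family `(1 + ε, 1 - ε)` is an `ℝ`-basis of the dual numbers, and with respect to this
basis both coordinate bilinear forms of the multiplication are non-degenerate. -/
theorem dual_numbers_nondegenerate_wrt_alternative_basis :
    (∃ b : Module.Basis (Fin 2) ℝ (DualNumber ℝ),
        b 0 = 1 + (ε : DualNumber ℝ) ∧ b 1 = 1 - (ε : DualNumber ℝ)) ∧
    (∀ B₀ B₁ : DualNumber ℝ → DualNumber ℝ → ℝ,
      (∀ x y : DualNumber ℝ,
        x * y = B₀ x y • (1 + (ε : DualNumber ℝ)) + B₁ x y • (1 - (ε : DualNumber ℝ))) →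
      (((∀ y : DualNumber ℝ, (∀ x, B₀ x y = 0) → y = 0) ∧
        (∀ x : DualNumber ℝ, (∀ y, B₀ x y = 0) → x = 0)) ∧
       ((∀ y : DualNumber ℝ, (∀ x, B₁ x y = 0) → y = 0) ∧
        (∀ x : DualNumber ℝ, (∀ y, B₁ x y = 0) → x = 0)))) := by
  constructor
  · refine ⟨Module.Basis.ofEquivFun dualAltEquiv, ?_, ?_⟩ <;>
      simp [Module.Basis.coe_ofEquivFun, dualAltEquiv, Pi.single_apply] <;>
      ext <;> simp
  · intro B₀ B₁ h
    have hB := coordB₀ B₀ B₁ h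
    have key : ∀ (B : DualNumber ℝ → DualNumber ℝ → ℝ) (s : ℝ),
        (∀ x y, B x y = (x.fst * y.fst + s * (x.fst * y.snd + x.snd * y.fst)) / 2) →
        s ≠ 0 →
        ((∀ y : DualNumber ℝ, (∀ x, B x y = 0) → y = 0) ∧
         (∀ x : DualNumber ℝ, (∀ y, B x y = 0) → x = 0)) := by
      intro B s hBs hs
      constructor
      · intro y hy
        have h1 := hy ε
        have h2 := hy 1
        rw [hBs] at h1 h2
        simp [hs] at h1 h2
        have hys : y.snd = 0 := by rw [h1] at h2; simpa [hs] using h2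
        ext <;> simp [h1, hys]
      · intro x hx
        have h1 := hx ε
        have h2 := hx 1
        rw [hBs] at h1 h2
        simp [hs] at h1 h2
        have hxs : x.snd = 0 := by rw [h1] at h2; simpa [hs] using h2
        ext <;> simp [h1, hxs]
    constructor
    · exact key B₀ 1 (fun x y => by rw [(hB x y).1]; ring) one_ne_zero
    · exact key B₁ (-1) (fun x y => by rw [(hB x y).2]; ring) (by norm_num)
end

section
/- Universal approximation theorem for vector-valued MLP networks with scalar output weights: Let n, N ≥ 1, let V = ℝⁿ with its standard basis, and let μ : V × V → V be an ℝ-bilinear multiplication such that for every k ∈ {0,…,n−1} the coordinate bilinear form B_k(x,y) = (μ(x,y))_k is non-degenerate. Let ψ : ℝ → ℝ be a Tauber–Wiener function such that ψ(t) → 0 as t → −∞ or ψ(t) → 0 as t → +∞, and let Ψ : V → V be the split activation (Ψ(x))_k = ψ(x_k). Then for every compact set K ⊆ Vᴺ, every continuous function f : Vᴺ → V, and every ε > 0, there exist M ∈ ℕ, real scalars α₁,…,α_M ∈ ℝ, weights w_{ij} ∈ V (1 ≤ i ≤ M, 1 ≤ j ≤ N), and biases b₁,…,b_M ∈ V such that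 ‖ Σ_{i=1}^M α_i · Ψ( Σ_{j=1}^N μ(w_{ij}, x_j) + b_i ) − f(x) ‖ ≤ ε for all x = (x₁,…,x_N) ∈ K. -/
/-!
By Stone–Weierstrass, the ridge functions `x ↦ cos (L x + θ)` are uniformly dense in the continuous
functions on a compact set (their span is closed under products by the product-to-sum formula),
and the Tauber–Wiener property approximates each of them, on the compact range of `L x + θ`, by
combinations of `ψ`-ridges. Hence the ridges `x ↦ ψ (L x + θ)` are uniformly dense as well.

Non-degeneracy of `B_k` makes every linear functional on `Vᴺ` of the form
`x ↦ (∑ j, μ (w j) (x j))_k`, so one neuron with bias `θ` in coordinate `k` reproduces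
`ψ (L x + θ)` in coordinate `k`; its other coordinates get a bias so far out in the direction where
`ψ` vanishes that they are uniformly small on `K`. So every `x ↦ f_k(x) e_k`, and hence `f`, is a
uniform limit of networks on `K`.
-/

open Filter

/-- `ψ` is a Tauber–Wiener function: every continuous real function can be uniformly
approximated on every closed interval by finite linear combinations of the form
`t ↦ ∑ i, α i * ψ (w i * t + θ i)`. -/
def IsTauberWiener (ψ : ℝ → ℝ) : Prop :=
  ∀ f : ℝ → ℝ, Continuous f → ∀ a b : ℝ, ∀ ε : ℝ, 0 < ε →
    ∃ M : ℕ, ∃ α w θ : Fin M → ℝ,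
      ∀ t ∈ Set.Icc a b, |f t - ∑ i, α i * ψ (w i * t + θ i)| ≤ ε

open Set Submodule

theorem Submodule.exists_fin_sum_eq_of_mem_span_range {R M ι : Type*} [Semiring R]
    [AddCommMonoid M] [Module R M] {v : ι → M} {x : M} (hx : x ∈ span R (range v)) :
    ∃ (m : ℕ) (c : Fin m → R) (i : Fin m → ι), ∑ k, c k • v (i k) = x := by
  obtain ⟨m, c, g, rfl⟩ := mem_span_set'.1 hx
  choose i hi using fun k => (g k).2
  exact ⟨m, c, i, by simp only [hi]⟩

namespace Submodule

variable {X 𝕜 E F : Type*} [NontriviallyNormedField 𝕜] [SeminormedAddCommGroup E] [NormedSpace 𝕜 E]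
  [SeminormedAddCommGroup F] [NormedSpace 𝕜 F]

/-- Uniform closure on `K` taken among arbitrary functions, not in `C(K, E)`: a Tauber–Wiener `ψ`
need not be continuous, and neither need the networks built from it. -/
def uniformClosureOn (P : Submodule 𝕜 (X → E)) (K : Set X) : Submodule 𝕜 (X → E) where
  carrier := {g | ∀ ε > 0, ∃ h ∈ P, ∀ x ∈ K, ‖g x - h x‖ ≤ ε}
  zero_mem' ε hε := ⟨0, P.zero_mem, by simp [hε.le]⟩
  add_mem' {g₁ g₂} hg₁ hg₂ ε hε := by
    obtain ⟨h₁, hh₁, hgh₁⟩ := hg₁ (ε / 2) (half_pos hε)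
    obtain ⟨h₂, hh₂, hgh₂⟩ := hg₂ (ε / 2) (half_pos hε)
    refine ⟨h₁ + h₂, P.add_mem hh₁ hh₂, fun x hx => ?_⟩
    calc ‖(g₁ + g₂) x - (h₁ + h₂) x‖ = ‖(g₁ x - h₁ x) + (g₂ x - h₂ x)‖ := by
          rw [Pi.add_apply, Pi.add_apply, add_sub_add_comm]
      _ ≤ ε / 2 + ε / 2 := (norm_add_le _ _).trans (add_le_add (hgh₁ x hx) (hgh₂ x hx))
      _ = ε := add_halves ε
  smul_mem' c g hg ε hε := by
    obtain ⟨h, hh, hgh⟩ := hg (ε / (‖c‖ + 1)) (by positivity)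
    refine ⟨c • h, P.smul_mem c hh, fun x hx => ?_⟩
    calc ‖(c • g) x - (c • h) x‖ = ‖c‖ * ‖g x - h x‖ := by
          rw [Pi.smul_apply, Pi.smul_apply, ← smul_sub, norm_smul]
      _ ≤ ‖c‖ * (ε / (‖c‖ + 1)) := by gcongr; exact hgh x hx
      _ ≤ ε := by
          rw [mul_div_assoc', div_le_iff₀ (by positivity)]
          nlinarith [norm_nonneg c]

variable {P Q : Submodule 𝕜 (X → E)} {K : Set X}

theorem uniformClosureOn_le_of_le (hQ : Q ≤ P.uniformClosureOn K) :
    Q.uniformClosureOn K ≤ P.uniformClosureOn K := by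
  intro g hg ε hε
  obtain ⟨h, hh, hgh⟩ := hg (ε / 2) (half_pos hε)
  obtain ⟨h', hh', hhh'⟩ := hQ hh (ε / 2) (half_pos hε)
  refine ⟨h', hh', fun x hx => ?_⟩
  calc ‖g x - h' x‖ ≤ ‖g x - h x‖ + ‖h x - h' x‖ := norm_sub_le_norm_sub_add_norm_sub _ _ _
    _ ≤ ε / 2 + ε / 2 := add_le_add (hgh x hx) (hhh' x hx)
    _ = ε := add_halves ε

theorem map_uniformClosureOn_le (T : E →L[𝕜] F) :
    (P.uniformClosureOn K).map ((T : E →ₗ[𝕜] F).compLeft X) ≤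
      (P.map ((T : E →ₗ[𝕜] F).compLeft X)).uniformClosureOn K := by
  rintro _ ⟨g, hg, rfl⟩ ε hε
  obtain ⟨h, hh, hgh⟩ := hg (ε / (‖T‖ + 1)) (by positivity)
  refine ⟨_, mem_map_of_mem hh, fun x hx => ?_⟩
  calc ‖T (g x) - T (h x)‖ ≤ ‖T‖ * ‖g x - h x‖ := by rw [← map_sub]; exact T.le_opNorm _
    _ ≤ ‖T‖ * (ε / (‖T‖ + 1)) := by gcongr; exact hgh x hx
    _ ≤ ε := by
        rw [mul_div_assoc', div_le_iff₀ (by positivity)]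
        nlinarith [norm_nonneg T]

end Submodule

section Ridge

variable {X : Type*} [TopologicalSpace X] [AddCommGroup X] [Module ℝ X]

variable (X) in
def ridgeSpan (σ : ℝ → ℝ) : Submodule ℝ (X → ℝ) :=
  span ℝ (range fun p : StrongDual ℝ X × ℝ => fun x => σ (p.1 x + p.2))

theorem continuous_mem_uniformClosureOn_ridgeSpan_cos [SeparatingDual ℝ X] {K : Set X}
    (hK : IsCompact K) {g : X → ℝ} (hg : Continuous g) :
    g ∈ (ridgeSpan X Real.cos).uniformClosureOn K := by
  let r : StrongDual ℝ X × ℝ → C(X, ℝ) := fun p => ⟨fun x => Real.cos (p.1 x + p.2), by fun_prop⟩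
  have hr_mul (p q) : r p * r q = (2⁻¹ : ℝ) • (r (p - q) + r (p + q)) := by
    ext x
    have h := Real.two_mul_cos_mul_cos (p.1 x + p.2) (q.1 x + q.2)
    simp only [r, ContinuousMap.mul_apply, ContinuousMap.smul_apply, ContinuousMap.add_apply,
      ContinuousMap.coe_mk, Prod.fst_add, Prod.snd_add, Prod.fst_sub, Prod.snd_sub,
      add_apply, sub_apply, smul_eq_mul]
    rw [add_add_add_comm, sub_add_sub_comm, ← h]
    ring
  have hmul : ∀ a b, a ∈ span ℝ (range r) → b ∈ span ℝ (range r) → a * b ∈ span ℝ (range r) := by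
    intro a b ha hb
    refine (span_mul_span ℝ (range r) (range r)).le.trans ?_ (mul_mem_mul ha hb)
    rw [span_le]
    rintro _ ⟨_, ⟨p, rfl⟩, _, ⟨q, rfl⟩, rfl⟩
    show r p * r q ∈ _
    rw [hr_mul]
    exact smul_mem _ _ (add_mem (subset_span ⟨_, rfl⟩) (subset_span ⟨_, rfl⟩))
  have hone : (1 : C(X, ℝ)) ∈ span ℝ (range r) :=
    subset_span ⟨0, by ext; simp [r]⟩
  let A := (span ℝ (range r)).toSubalgebra hone hmul
  have hsep : A.SeparatesPoints := by
    intro x y hxy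
    -- with `L (y - x) = 1`, the ridge `cos (π L z - π L x)` is `1` at `x` and `-1` at `y`
    obtain ⟨L, hL⟩ := SeparatingDual.exists_eq_one (R := ℝ) (sub_ne_zero.2 hxy.symm)
    refine ⟨_, ⟨r (Real.pi • L, -(Real.pi • L) x), subset_span ⟨_, rfl⟩, rfl⟩, ?_⟩
    simp only [r, ContinuousMap.coe_mk, smul_apply, smul_eq_mul, map_sub] at hL ⊢
    rw [add_neg_cancel, show Real.pi * L y + -(Real.pi * L x) = Real.pi by
      linear_combination Real.pi * hL, Real.cos_zero, Real.cos_pi]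
    norm_num
  intro ε hε
  obtain ⟨h, hh, hgh⟩ :=
    ContinuousMap.exists_mem_subalgebra_near_continuous_of_isCompact_of_separatesPoints hsep
      ⟨g, hg⟩ hK hε
  have hcoe : ⇑h ∈ (span ℝ (range r)).map (ContinuousMap.coeFnLinearMap ℝ) := mem_map_of_mem hh
  rw [map_span, ← range_comp] at hcoe
  exact ⟨h, hcoe, fun x hx => by rw [norm_sub_rev]; exact (hgh x hx).le⟩

theorem IsTauberWiener.ridgeSpan_le_uniformClosureOn {ψ σ : ℝ → ℝ} (hψ : IsTauberWiener ψ)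
    (hσ : Continuous σ) {K : Set X} (hK : IsCompact K) :
    ridgeSpan X σ ≤ (ridgeSpan X ψ).uniformClosureOn K := by
  rw [ridgeSpan, span_le]
  rintro _ ⟨⟨L, θ⟩, rfl⟩ ε hε
  obtain ⟨C, hC⟩ := hK.exists_bound_of_continuousOn (f := fun x => L x + θ) (by fun_prop)
  obtain ⟨M, α, w, β, hαwβ⟩ := hψ σ hσ (-C) C ε hε
  refine ⟨∑ i, α i • fun x => ψ ((w i • L) x + (w i * θ + β i)),
    sum_mem fun i _ => smul_mem _ _ (subset_span ⟨(w i • L, w i * θ + β i), rfl⟩), fun x hx => ?_⟩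
  have := hαwβ (L x + θ) (abs_le.1 (hC x hx))
  simpa [Finset.sum_apply, mul_add, add_assoc] using this

theorem IsTauberWiener.continuous_mem_uniformClosureOn_ridgeSpan [SeparatingDual ℝ X]
    {ψ : ℝ → ℝ} (hψ : IsTauberWiener ψ) {K : Set X} (hK : IsCompact K) {g : X → ℝ}
    (hg : Continuous g) : g ∈ (ridgeSpan X ψ).uniformClosureOn K :=
  uniformClosureOn_le_of_le (hψ.ridgeSpan_le_uniformClosureOn Real.continuous_cos hK)
    (continuous_mem_uniformClosureOn_ridgeSpan_cos hK hg)

end Ridge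

theorem LinearMap.SeparatingLeft.exists_sum_eq {𝕜 V ι : Type*} [Field 𝕜] [AddCommGroup V]
    [Module 𝕜 V] [FiniteDimensional 𝕜 V] [Fintype ι] {B : V →ₗ[𝕜] V →ₗ[𝕜] 𝕜}
    (hB : B.SeparatingLeft) (L : Module.Dual 𝕜 (ι → V)) :
    ∃ w : ι → V, ∀ x, ∑ j, B (w j) (x j) = L x := by
  classical
  let Φ : (ι → V) →ₗ[𝕜] Module.Dual 𝕜 (ι → V) :=
    ∑ j, B.compl₁₂ (LinearMap.proj j) (LinearMap.proj j)
  have hΦ (w x : ι → V) : Φ w x = ∑ j, B (w j) (x j) := by simp [Φ]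
  have hinj : Function.Injective Φ := by
    rw [← LinearMap.ker_eq_bot, LinearMap.ker_eq_bot']
    intro w hw
    funext j
    refine hB _ fun y => ?_
    simpa [hΦ, Pi.single_apply, apply_ite] using congr($hw (Pi.single j y))
  obtain ⟨w, hw⟩ := (LinearMap.injective_iff_surjective_of_finrank_eq_finrank
    Subspace.dual_finrank_eq.symm).1 hinj L
  exact ⟨w, fun x => by rw [← hΦ, hw]⟩

theorem exists_forall_abs_add_le {ψ : ℝ → ℝ}
    (hψ : Tendsto ψ atBot (nhds 0) ∨ Tendsto ψ atTop (nhds 0)) (C : ℝ) {δ : ℝ} (hδ : 0 < δ) :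
    ∃ β, ∀ s, |s| ≤ C → |ψ (s + β)| ≤ δ := by
  have hball : Metric.closedBall (0 : ℝ) δ ∈ nhds 0 := Metric.closedBall_mem_nhds 0 hδ
  rcases hψ with h | h
  · obtain ⟨T, hT⟩ := eventually_atBot.1 (h.eventually_mem hball)
    refine ⟨T - C, fun s hs => ?_⟩
    simpa using hT (s + (T - C)) (by linarith [(abs_le.1 hs).2])
  · obtain ⟨T, hT⟩ := eventually_atTop.1 (h.eventually_mem hball)
    refine ⟨T + C, fun s hs => ?_⟩
    simpa using hT (s + (T + C)) (by linarith [(abs_le.1 hs).1])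

theorem EuclideanSpace.norm_le_sum_norm_apply {κ : Type*} [Fintype κ] (v : EuclideanSpace ℝ κ) :
    ‖v‖ ≤ ∑ k, ‖v k‖ := by
  conv_lhs => rw [← (EuclideanSpace.basisFun κ ℝ).sum_repr v]
  refine (norm_sum_le _ _).trans_eq (Finset.sum_congr rfl fun k _ => ?_)
  simp [norm_smul]

def networkSpan (ι : Type*) {V : Type*} [Fintype ι] [AddCommGroup V] [Module ℝ V]
    (μ : V →ₗ[ℝ] V →ₗ[ℝ] V) (Ψ : V → V) : Submodule ℝ ((ι → V) → V) :=
  span ℝ (range fun p : (ι → V) × V => fun x => Ψ (∑ j, μ (p.1 j) (x j) + p.2))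

section Network

variable {ι κ : Type*} [Fintype ι] [Fintype κ] [DecidableEq κ]
  {μ : EuclideanSpace ℝ κ →ₗ[ℝ] EuclideanSpace ℝ κ →ₗ[ℝ] EuclideanSpace ℝ κ}
  {ψ : ℝ → ℝ} {Ψ : EuclideanSpace ℝ κ → EuclideanSpace ℝ κ}
  {K : Set (ι → EuclideanSpace ℝ κ)} {k : κ}

theorem ridge_smul_single_mem_uniformClosureOn_networkSpan
    (hψ : Tendsto ψ atBot (nhds 0) ∨ Tendsto ψ atTop (nhds 0)) (hΨ : ∀ x k, Ψ x k = ψ (x k))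
    (hk : (μ.compr₂ (EuclideanSpace.projₗ k)).SeparatingLeft) (hK : IsCompact K)
    (L : StrongDual ℝ (ι → EuclideanSpace ℝ κ)) (θ : ℝ) :
    (fun x => ψ (L x + θ) • EuclideanSpace.single k (1 : ℝ)) ∈
      (networkSpan ι μ Ψ).uniformClosureOn K := by
  obtain ⟨w, hw⟩ := hk.exists_sum_eq (L : Module.Dual ℝ (ι → EuclideanSpace ℝ κ))
  obtain ⟨C, hC⟩ := hK.exists_bound_of_continuousOn
    (f := fun x => ∑ j, μ (w j) (x j)) (by fun_prop)
  intro ε hε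
  set δ := ε / (Fintype.card κ + 1)
  obtain ⟨β, hβ⟩ := exists_forall_abs_add_le hψ C (δ := δ) (by positivity)
  -- the bias puts `θ` in coordinate `k`, and pushes every other coordinate where `|ψ| ≤ δ`
  let b : EuclideanSpace ℝ κ := WithLp.toLp 2 (Function.update (fun _ => β) k θ)
  refine ⟨fun x => Ψ (∑ j, μ (w j) (x j) + b), subset_span ⟨(w, b), rfl⟩, fun x hx => ?_⟩
  have hcoord (k' : κ) : ‖(ψ (L x + θ) • EuclideanSpace.single k (1 : ℝ) -
      Ψ (∑ j, μ (w j) (x j) + b)) k'‖ ≤ δ := by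
    by_cases hk' : k' = k
    · subst hk'
      have hwx : ∑ j, μ (w j) (x j) k' = L x := hw x
      simp only [PiLp.sub_apply, PiLp.smul_apply, PiLp.single_eq_same, smul_eq_mul, mul_one, hΨ,
        PiLp.add_apply, WithLp.ofLp_sum, Finset.sum_apply, hwx, Function.update_self, sub_self,
        norm_zero, b]
      positivity
    · simp only [PiLp.sub_apply, PiLp.smul_apply, ne_eq, hk', not_false_eq_true,
        PiLp.single_eq_of_ne, smul_eq_mul, mul_zero, hΨ, PiLp.add_apply, WithLp.ofLp_sum,
        Finset.sum_apply, Function.update_of_ne, zero_sub, norm_neg, Real.norm_eq_abs, b]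
      refine hβ _ (le_trans ?_ (hC x hx))
      simpa using PiLp.norm_apply_le (∑ j, μ (w j) (x j)) k'
  calc _ ≤ ∑ k', ‖(ψ (L x + θ) • EuclideanSpace.single k (1 : ℝ) -
        Ψ (∑ j, μ (w j) (x j) + b)) k'‖ := EuclideanSpace.norm_le_sum_norm_apply _
    _ ≤ Fintype.card κ * δ := (Finset.sum_le_sum fun k' _ => hcoord k').trans_eq (by simp)
    _ ≤ ε := by
      rw [mul_div_assoc', div_le_iff₀ (by positivity)]
      nlinarith

theorem continuous_smul_single_mem_uniformClosureOn_networkSpan (hTW : IsTauberWiener ψ)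
    (hψ : Tendsto ψ atBot (nhds 0) ∨ Tendsto ψ atTop (nhds 0)) (hΨ : ∀ x k, Ψ x k = ψ (x k))
    (hk : (μ.compr₂ (EuclideanSpace.projₗ k)).SeparatingLeft) (hK : IsCompact K)
    {g : (ι → EuclideanSpace ℝ κ) → ℝ} (hg : Continuous g) :
    (fun x => g x • EuclideanSpace.single k (1 : ℝ)) ∈ (networkSpan ι μ Ψ).uniformClosureOn K := by
  let T := ContinuousLinearMap.toSpanSingleton ℝ (EuclideanSpace.single k (1 : ℝ))
  have hT : (ridgeSpan _ ψ).map ((T : ℝ →ₗ[ℝ] _).compLeft _) ≤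
      (networkSpan ι μ Ψ).uniformClosureOn K := by
    rw [ridgeSpan, map_span_le]
    rintro _ ⟨⟨L, θ⟩, rfl⟩
    exact ridge_smul_single_mem_uniformClosureOn_networkSpan hψ hΨ hk hK L θ
  exact uniformClosureOn_le_of_le hT <| map_uniformClosureOn_le T <|
    mem_map_of_mem (hTW.continuous_mem_uniformClosureOn_ridgeSpan hK hg)

end Network

theorem universal_approximation_V_MLP_scalar_output_general
    (n N : ℕ)
    (μ : EuclideanSpace ℝ (Fin n) →ₗ[ℝ] EuclideanSpace ℝ (Fin n) →ₗ[ℝ] EuclideanSpace ℝ (Fin n))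
    (hnd : ∀ k : Fin n,
      (∀ y : EuclideanSpace ℝ (Fin n), (∀ x, μ x y k = 0) → y = 0) ∧
      (∀ x : EuclideanSpace ℝ (Fin n), (∀ y, μ x y k = 0) → x = 0))
    (ψ : ℝ → ℝ) (hTW : IsTauberWiener ψ)
    (hlim : Tendsto ψ atBot (nhds 0) ∨ Tendsto ψ atTop (nhds 0))
    (Ψ : EuclideanSpace ℝ (Fin n) → EuclideanSpace ℝ (Fin n))
    (hΨ : ∀ (x : EuclideanSpace ℝ (Fin n)) (k : Fin n), Ψ x k = ψ (x k))
    (K : Set (Fin N → EuclideanSpace ℝ (Fin n))) (hK : IsCompact K)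
    (f : (Fin N → EuclideanSpace ℝ (Fin n)) → EuclideanSpace ℝ (Fin n)) (hf : Continuous f)
    (ε : ℝ) (hε : 0 < ε) :
    ∃ M : ℕ, ∃ α : Fin M → ℝ,
      ∃ w : Fin M → Fin N → EuclideanSpace ℝ (Fin n),
      ∃ b : Fin M → EuclideanSpace ℝ (Fin n),
        ∀ x ∈ K,
          ‖(∑ i, α i • Ψ ((∑ j, μ (w i j) (x j)) + b i)) - f x‖ ≤ ε := by
  have hf_eq : f = ∑ k, fun x => f x k • EuclideanSpace.single k (1 : ℝ) := by
    funext x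
    simpa using ((EuclideanSpace.basisFun (Fin n) ℝ).sum_repr (f x)).symm
  have hf_mem : f ∈ (networkSpan (Fin N) μ Ψ).uniformClosureOn K := by
    rw [hf_eq]
    exact sum_mem fun k _ => continuous_smul_single_mem_uniformClosureOn_networkSpan hTW hlim hΨ
      (hnd k).2 hK (by fun_prop)
  obtain ⟨h, hh, hfh⟩ := hf_mem ε hε
  obtain ⟨M, α, p, rfl⟩ := exists_fin_sum_eq_of_mem_span_range hh
  exact ⟨M, α, fun i => (p i).1, fun i => (p i).2, fun x hx => by
    simpa [norm_sub_rev] using hfh x hx⟩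

/-- Universal approximation theorem for vector-valued MLP networks with scalar output
weights, on a non-degenerate algebra. -/
theorem universal_approximation_V_MLP_scalar_output
    (n N : ℕ) (hn : 1 ≤ n) (hN : 1 ≤ N)
    (μ : EuclideanSpace ℝ (Fin n) →ₗ[ℝ] EuclideanSpace ℝ (Fin n) →ₗ[ℝ] EuclideanSpace ℝ (Fin n))
    (hnd : ∀ k : Fin n,
      (∀ y : EuclideanSpace ℝ (Fin n), (∀ x, μ x y k = 0) → y = 0) ∧
      (∀ x : EuclideanSpace ℝ (Fin n), (∀ y, μ x y k = 0) → x = 0))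
    (ψ : ℝ → ℝ) (hTW : IsTauberWiener ψ)
    (hlim : Tendsto ψ atBot (nhds 0) ∨ Tendsto ψ atTop (nhds 0))
    (Ψ : EuclideanSpace ℝ (Fin n) → EuclideanSpace ℝ (Fin n))
    (hΨ : ∀ (x : EuclideanSpace ℝ (Fin n)) (k : Fin n), Ψ x k = ψ (x k))
    (K : Set (Fin N → EuclideanSpace ℝ (Fin n))) (hK : IsCompact K)
    (f : (Fin N → EuclideanSpace ℝ (Fin n)) → EuclideanSpace ℝ (Fin n)) (hf : Continuous f)
    (ε : ℝ) (hε : 0 < ε) :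
    ∃ M : ℕ, ∃ α : Fin M → ℝ,
      ∃ w : Fin M → Fin N → EuclideanSpace ℝ (Fin n),
      ∃ b : Fin M → EuclideanSpace ℝ (Fin n),
        ∀ x ∈ K,
          ‖(∑ i, α i • Ψ ((∑ j, μ (w i j) (x j)) + b i)) - f x‖ ≤ ε :=
  universal_approximation_V_MLP_scalar_output_general n N μ hnd ψ hTW hlim Ψ hΨ K hK f hf ε hε
end

section
/- Universal approximation for complex-valued MLP networks with split activation: Let ψ : ℝ → ℝ be a Tauber–Wiener function such that ψ(t) → 0 as t → −∞ or ψ(t) → 0 as t → +∞, and let ψ_ℂ : ℂ → ℂ be the split activation ψ_ℂ(ξ₀ + ξ₁ i) = ψ(ξ₀) + ψ(ξ₁) i. Then for every N ≥ 1, every compact set K ⊆ ℂᴺ, every continuous function f : ℂᴺ → ℂ, and every ε > 0, there exist M ∈ ℕ and complex parameters α_i, b_i ∈ ℂ and w_{ij} ∈ ℂ (1 ≤ i ≤ M, 1 ≤ j ≤ N) such that | Σ_{i=1}^M α_i · ψ_ℂ( Σ_{j=1}^N w_{ij} x_j + b_i ) − f(x) | ≤ ε for all x = (x₁,…,x_N)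 ∈ K. -/
open Filter

/-- The set of functions uniformly approximable on `K` to arbitrary precision by
one-hidden-layer networks with activation `ψC`. -/
def NetApprox (ψC : ℂ → ℂ) {N : ℕ} (K : Set (Fin N → ℂ)) (g : (Fin N → ℂ) → ℂ) : Prop :=
  ∀ δ : ℝ, 0 < δ → ∃ M : ℕ, ∃ α b : Fin M → ℂ, ∃ w : Fin M → Fin N → ℂ,
    ∀ x ∈ K, ‖(∑ i, α i * ψC ((∑ j, w i j * x j) + b i)) - g x‖ ≤ δ

lemma netApprox_zero (ψC : ℂ → ℂ) {N : ℕ} (K : Set (Fin N → ℂ)) :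
    NetApprox ψC K (fun _ => 0) := by
  intro δ hδ
  exact ⟨0, fun i => 0, fun i => 0, fun i => 0, fun x hx => by simp [hδ.le]⟩

lemma netApprox_add (ψC : ℂ → ℂ) {N : ℕ} {K : Set (Fin N → ℂ)}
    {g₁ g₂ : (Fin N → ℂ) → ℂ} (h₁ : NetApprox ψC K g₁) (h₂ : NetApprox ψC K g₂) :
    NetApprox ψC K (fun x => g₁ x + g₂ x) := by
  intro δ hδ
  obtain ⟨M₁, α₁, b₁, w₁, H₁⟩ := h₁ (δ/2) (by positivity)
  obtain ⟨M₂, α₂, b₂, w₂, H₂⟩ := h₂ (δ/2) (by positivity)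
  refine ⟨M₁ + M₂, Fin.append α₁ α₂, Fin.append b₁ b₂, Fin.append w₁ w₂, ?_⟩
  intro x hx
  have hsplit : (∑ i : Fin (M₁+M₂), Fin.append α₁ α₂ i *
        ψC ((∑ j, Fin.append w₁ w₂ i j * x j) + Fin.append b₁ b₂ i))
      = (∑ i : Fin M₁, α₁ i * ψC ((∑ j, w₁ i j * x j) + b₁ i))
        + (∑ i : Fin M₂, α₂ i * ψC ((∑ j, w₂ i j * x j) + b₂ i)) := by
    rw [Fin.sum_univ_add]
    simp [Fin.append_left, Fin.append_right]
  rw [hsplit]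
  have hkey : (∑ i : Fin M₁, α₁ i * ψC ((∑ j, w₁ i j * x j) + b₁ i))
        + (∑ i : Fin M₂, α₂ i * ψC ((∑ j, w₂ i j * x j) + b₂ i)) - (g₁ x + g₂ x)
      = ((∑ i : Fin M₁, α₁ i * ψC ((∑ j, w₁ i j * x j) + b₁ i)) - g₁ x)
        + ((∑ i : Fin M₂, α₂ i * ψC ((∑ j, w₂ i j * x j) + b₂ i)) - g₂ x) := by ring
  rw [hkey]
  calc ‖_‖ ≤ _ + _ := norm_add_le _ _
    _ ≤ δ/2 + δ/2 := add_le_add (H₁ x hx) (H₂ x hx)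
    _ = δ := by ring

lemma netApprox_sum (ψC : ℂ → ℂ) {N : ℕ} {K : Set (Fin N → ℂ)}
    (n : ℕ) (g : Fin n → (Fin N → ℂ) → ℂ) (hg : ∀ i, NetApprox ψC K (g i)) :
    NetApprox ψC K (fun x => ∑ i, g i x) := by
  induction n with
  | zero => simpa using netApprox_zero ψC K
  | succ n ih =>
    have h1 := netApprox_add ψC (hg 0) (ih (fun i => g i.succ) (fun i => hg i.succ))
    have h2 : (fun x => ∑ i : Fin (n+1), g i x)
        = fun x => g 0 x + ∑ i : Fin n, g i.succ x := by
      funext x; rw [Fin.sum_univ_succ]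
    rw [h2]; exact h1

lemma netApprox_closure (ψC : ℂ → ℂ) {N : ℕ} {K : Set (Fin N → ℂ)}
    {h : (Fin N → ℂ) → ℂ}
    (hh : ∀ δ : ℝ, 0 < δ → ∃ g, NetApprox ψC K g ∧ ∀ x ∈ K, ‖g x - h x‖ ≤ δ) :
    NetApprox ψC K h := by
  intro δ hδ
  obtain ⟨g, hgA, hg⟩ := hh (δ/2) (by positivity)
  obtain ⟨M, α, b, w, H⟩ := hgA (δ/2) (by positivity)
  refine ⟨M, α, b, w, fun x hx => ?_⟩
  have hkey : (∑ i, α i * ψC ((∑ j, w i j * x j) + b i)) - h x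
      = ((∑ i, α i * ψC ((∑ j, w i j * x j) + b i)) - g x) + (g x - h x) := by ring
  rw [hkey]
  calc ‖_‖ ≤ _ + _ := norm_add_le _ _
    _ ≤ δ/2 + δ/2 := add_le_add (H x hx) (hg x hx)
    _ = δ := by ring

lemma continuous_lin {N : ℕ} (w : Fin N → ℂ) :
    Continuous (fun x : Fin N → ℂ => ∑ j, w j * x j) :=
  continuous_finset_sum _ (fun j _ => continuous_const.mul (continuous_apply j))

lemma exists_bound {N : ℕ} {K : Set (Fin N → ℂ)} (hK : IsCompact K)
    (g : (Fin N → ℂ) → ℝ) (hg : Continuous g) : ∃ R : ℝ, ∀ x ∈ K, |g x| ≤ R := by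
  obtain ⟨C, hC⟩ := hK.exists_bound_of_continuousOn hg.continuousOn
  exact ⟨C, fun x hx => by simpa [Real.norm_eq_abs] using hC x hx⟩

/-- Using the decay of `ψ` at `−∞` or `+∞`, we can find a real shift `s` making
`ψ ((∑ w x).im + s)` uniformly small on `K`. -/
lemma exists_shift (ψ : ℝ → ℝ)
    (hlim : Tendsto ψ atBot (nhds 0) ∨ Tendsto ψ atTop (nhds 0))
    {N : ℕ} {K : Set (Fin N → ℂ)} (hK : IsCompact K) (w : Fin N → ℂ)
    (δ : ℝ) (hδ : 0 < δ) :
    ∃ s : ℝ, ∀ x ∈ K, |ψ ((∑ j, w j * x j).im + s)| ≤ δ := by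
  obtain ⟨R, hR⟩ := exists_bound hK (fun x => (∑ j, w j * x j).im)
    (Complex.continuous_im.comp (continuous_lin w))
  rcases hlim with hl | hl
  · have h1 : ∀ᶠ t in atBot, |ψ t| < δ := by
      have := Metric.tendsto_nhds.mp hl δ hδ
      simpa [Real.dist_eq] using this
    obtain ⟨T, hT⟩ := eventually_atBot.mp h1
    refine ⟨T - R, fun x hx => (hT _ ?_).le⟩
    have := (abs_le.mp (hR x hx)).2
    linarith
  · have h1 : ∀ᶠ t in atTop, |ψ t| < δ := by
      have := Metric.tendsto_nhds.mp hl δ hδ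
      simpa [Real.dist_eq] using this
    obtain ⟨T, hT⟩ := eventually_atTop.mp h1
    refine ⟨T + R, fun x hx => (hT _ ?_).le⟩
    have := (abs_le.mp (hR x hx)).1
    linarith

/-- A single real ridge term with complex coefficient is network-approximable. -/
lemma netApprox_ridge (ψ : ℝ → ℝ)
    (hlim : Tendsto ψ atBot (nhds 0) ∨ Tendsto ψ atTop (nhds 0))
    (ψC : ℂ → ℂ) (hψC : ∀ z : ℂ, ψC z = (ψ z.re : ℂ) + (ψ z.im : ℂ) * Complex.I)
    {N : ℕ} {K : Set (Fin N → ℂ)} (hK : IsCompact K)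
    (c : ℂ) (w : Fin N → ℂ) (θ : ℝ) :
    NetApprox ψC K (fun x => c * (ψ ((∑ j, w j * x j).re + θ) : ℂ)) := by
  intro δ hδ
  have hcpos : (0:ℝ) < ‖c‖ + 1 := by positivity
  have hδ' : 0 < δ / (‖c‖ + 1) := by positivity
  obtain ⟨s, hs⟩ := exists_shift ψ hlim hK w _ hδ'
  refine ⟨1, fun _ => c, fun _ => (θ : ℂ) + (s : ℂ) * Complex.I, fun _ => w, ?_⟩
  intro x hx
  set z : ℂ := (∑ j, w j * x j) + ((θ : ℂ) + (s : ℂ) * Complex.I) with hz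
  have hre : z.re = (∑ j, w j * x j).re + θ := by simp [hz]
  have him : z.im = (∑ j, w j * x j).im + s := by simp [hz]
  have hsum1 : (∑ i : Fin 1, (fun _ => c) i * ψC ((∑ j, (fun _ => w) i j * x j)
      + (fun _ => (θ : ℂ) + (s : ℂ) * Complex.I) i)) = c * ψC z := by
    simp [hz]
  rw [hsum1, hψC z, hre]
  have hkey : c * ((ψ ((∑ j, w j * x j).re + θ) : ℂ) + (ψ z.im : ℂ) * Complex.I)
      - c * (ψ ((∑ j, w j * x j).re + θ) : ℂ) = c * (ψ z.im : ℂ) * Complex.I := by ring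
  rw [hkey]
  rw [norm_mul, norm_mul, Complex.norm_I, Complex.norm_real, Real.norm_eq_abs, mul_one]
  have h1 : |ψ z.im| ≤ δ / (‖c‖ + 1) := by rw [him]; exact hs x hx
  calc ‖c‖ * |ψ z.im| ≤ (‖c‖ + 1) * (δ / (‖c‖ + 1)) := by
        apply mul_le_mul (by linarith) h1 (abs_nonneg _) (by positivity)
    _ = δ := by field_simp

/-- A ridge function `c • h(ℓ(x))` with `h` continuous is network-approximable,
via the Tauber–Wiener property of `ψ`. -/
lemma netApprox_cont_ridge (ψ : ℝ → ℝ) (hTW : IsTauberWiener ψ)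
    (hlim : Tendsto ψ atBot (nhds 0) ∨ Tendsto ψ atTop (nhds 0))
    (ψC : ℂ → ℂ) (hψC : ∀ z : ℂ, ψC z = (ψ z.re : ℂ) + (ψ z.im : ℂ) * Complex.I)
    {N : ℕ} {K : Set (Fin N → ℂ)} (hK : IsCompact K)
    (c : ℂ) (w : Fin N → ℂ) (h : ℝ → ℝ) (hh : Continuous h) :
    NetApprox ψC K (fun x => c * (h ((∑ j, w j * x j).re) : ℂ)) := by
  apply netApprox_closure
  intro δ hδ
  obtain ⟨R, hR⟩ := exists_bound hK (fun x => (∑ j, w j * x j).re)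
    (Complex.continuous_re.comp (continuous_lin w))
  have hδ' : 0 < δ / (‖c‖ + 1) := by positivity
  obtain ⟨M, α, wt, θ, hTWa⟩ := hTW h hh (-R) R _ hδ'
  refine ⟨fun x => ∑ i, (c * (α i : ℂ)) * (ψ (wt i * (∑ j, w j * x j).re + θ i) : ℂ),
    ?_, ?_⟩
  · apply netApprox_sum
    intro i
    have hmem := netApprox_ridge ψ hlim ψC hψC hK (c * (α i : ℂ))
      (fun j => (wt i : ℂ) * w j) (θ i)
    have heq : (fun x : Fin N → ℂ =>
          c * (α i : ℂ) * (ψ ((∑ j, ((wt i : ℂ) * w j) * x j).re + θ i) : ℂ))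
        = fun x => c * (α i : ℂ) * (ψ (wt i * (∑ j, w j * x j).re + θ i) : ℂ) := by
      funext x
      congr 3
      have : (∑ j, ((wt i : ℂ) * w j) * x j) = (wt i : ℂ) * ∑ j, w j * x j := by
        rw [Finset.mul_sum]; exact Finset.sum_congr rfl (fun j _ => by ring)
      rw [this, Complex.re_ofReal_mul]
    rw [heq] at hmem
    exact hmem
  · intro x hx
    have ht : (∑ j, w j * x j).re ∈ Set.Icc (-R) R := by
      have := abs_le.mp (hR x hx); exact ⟨this.1, this.2⟩
    have h1 := hTWa _ ht
    have h2 : (∑ i, (c * (α i : ℂ)) * (ψ (wt i * (∑ j, w j * x j).re + θ i) : ℂ))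
          - c * (h ((∑ j, w j * x j).re) : ℂ)
        = c * (((∑ i, α i * ψ (wt i * (∑ j, w j * x j).re + θ i)
            - h ((∑ j, w j * x j).re) : ℝ)) : ℂ) := by
      push_cast
      rw [mul_sub, Finset.mul_sum]
      congr 1
      exact Finset.sum_congr rfl (fun i _ => by ring)
    rw [h2, norm_mul, Complex.norm_real, Real.norm_eq_abs, abs_sub_comm]
    calc ‖c‖ * |h ((∑ j, w j * x j).re)
          - ∑ i, α i * ψ (wt i * (∑ j, w j * x j).re + θ i)|
        ≤ (‖c‖ + 1) * (δ / (‖c‖ + 1)) := by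
          apply mul_le_mul (by linarith) h1 (abs_nonneg _) (by positivity)
      _ = δ := by field_simp

/-- Complex exponential ridge functions are network-approximable. -/
lemma netApprox_exp (ψ : ℝ → ℝ) (hTW : IsTauberWiener ψ)
    (hlim : Tendsto ψ atBot (nhds 0) ∨ Tendsto ψ atTop (nhds 0))
    (ψC : ℂ → ℂ) (hψC : ∀ z : ℂ, ψC z = (ψ z.re : ℂ) + (ψ z.im : ℂ) * Complex.I)
    {N : ℕ} {K : Set (Fin N → ℂ)} (hK : IsCompact K)
    (c : ℂ) (w : Fin N → ℂ) :
    NetApprox ψC K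
      (fun x => c * Complex.exp (((∑ j, w j * x j).re : ℂ) * Complex.I)) := by
  have h1 := netApprox_cont_ridge ψ hTW hlim ψC hψC hK c w Real.cos Real.continuous_cos
  have h2 := netApprox_cont_ridge ψ hTW hlim ψC hψC hK (c * Complex.I) w
    Real.sin Real.continuous_sin
  have h3 := netApprox_add ψC h1 h2
  have heq : (fun x : Fin N → ℂ => c * (Real.cos ((∑ j, w j * x j).re) : ℂ)
        + (c * Complex.I) * (Real.sin ((∑ j, w j * x j).re) : ℂ))
      = fun x => c * Complex.exp (((∑ j, w j * x j).re : ℂ) * Complex.I) := by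
    funext x
    rw [Complex.exp_mul_I, Complex.ofReal_cos, Complex.ofReal_sin]
    ring
  rw [heq] at h3
  exact h3

/-- Approximation of continuous functions on a compact set by complex linear
combinations of ridge exponentials, via Stone–Weierstrass. -/
lemma exists_exp_combo {N : ℕ} {K : Set (Fin N → ℂ)} (hK : IsCompact K)
    (f : (Fin N → ℂ) → ℂ) (hf : Continuous f) (δ : ℝ) (hδ : 0 < δ) :
    ∃ (n : ℕ) (c : Fin n → ℂ) (W : Fin n → Fin N → ℂ),
      ∀ x ∈ K, ‖(∑ i, c i *
        Complex.exp ((((∑ j, W i j * x j).re : ℝ) : ℂ) * Complex.I)) - f x‖ ≤ δ := by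
  haveI : CompactSpace K := isCompact_iff_compactSpace.mp hK
  -- the exponential characters
  let e : (Fin N → ℂ) → C(K, ℂ) := fun w =>
    ⟨fun x => Complex.exp ((((∑ j, w j * (x : Fin N → ℂ) j).re : ℝ) : ℂ) * Complex.I),
      Complex.continuous_exp.comp ((Complex.continuous_ofReal.comp
        (Complex.continuous_re.comp ((continuous_lin w).comp
          continuous_subtype_val))).mul continuous_const)⟩
  have he_apply : ∀ (w : Fin N → ℂ) (x : K), e w x
      = Complex.exp ((((∑ j, w j * (x : Fin N → ℂ) j).re : ℝ) : ℂ) * Complex.I) :=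
    fun w x => rfl
  set S : Set C(K, ℂ) := Set.range e with hS
  have he_mul : ∀ w w', e w * e w' = e (fun j => w j + w' j) := by
    intro w w'
    ext x
    simp only [ContinuousMap.mul_apply, he_apply]
    rw [← Complex.exp_add]
    congr 1
    have hsum : (∑ j, (w j + w' j) * (x : Fin N → ℂ) j)
        = (∑ j, w j * (x : Fin N → ℂ) j) + ∑ j, w' j * (x : Fin N → ℂ) j := by
      rw [← Finset.sum_add_distrib]
      exact Finset.sum_congr rfl (fun j _ => by ring)
    rw [hsum, Complex.add_re]
    push_cast
    ring
  have he_one : e (fun _ => 0) = 1 := by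
    ext x
    simp [he_apply]
  have he_star : ∀ w, star (e w) = e (fun j => -(w j)) := by
    intro w
    ext x
    simp only [ContinuousMap.star_apply, he_apply]
    have hsum : (∑ j, (-(w j)) * (x : Fin N → ℂ) j)
        = -(∑ j, w j * (x : Fin N → ℂ) j) := by
      rw [← Finset.sum_neg_distrib]
      exact Finset.sum_congr rfl (fun j _ => by ring)
    rw [hsum, Complex.neg_re]
    rw [show star (Complex.exp ((((∑ j, w j * (x : Fin N → ℂ) j).re : ℝ) : ℂ) * Complex.I))
        = Complex.exp (starRingEnd ℂ ((((∑ j, w j * (x : Fin N → ℂ) j).re : ℝ) : ℂ)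
          * Complex.I)) from (Complex.exp_conj _).symm]
    congr 1
    rw [map_mul, Complex.conj_I, Complex.conj_ofReal]
    push_cast
    ring
  -- S is a submonoid
  let Smon : Submonoid C(K, ℂ) :=
    { carrier := S
      one_mem' := ⟨fun _ => 0, he_one⟩
      mul_mem' := by
        rintro a b ⟨w, rfl⟩ ⟨w', rfl⟩
        exact ⟨fun j => w j + w' j, (he_mul w w').symm⟩ }
  have hstarS : S ∪ star S = S := by
    apply Set.union_eq_self_of_subset_right
    intro g hg
    have h1 : star g ∈ S := hg
    obtain ⟨w, hw⟩ := h1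
    have : g = e (fun j => -(w j)) := by
      rw [← he_star w, hw, star_star]
    exact this ▸ ⟨fun j => -(w j), rfl⟩
  -- the star subalgebra generated by S
  set B : StarSubalgebra ℂ C(K, ℂ) := StarAlgebra.adjoin ℂ S with hB
  have hsep : B.SeparatesPoints := by
    rintro x y hxy
    have hxy' : (x : Fin N → ℂ) ≠ (y : Fin N → ℂ) := fun h => hxy (Subtype.ext h)
    obtain ⟨j, hj⟩ := Function.ne_iff.mp hxy'
    have hsingle : ∀ (v : ℂ) (z : Fin N → ℂ),
        (∑ j', (((1:ℝ) : ℂ) * (Pi.single j v : Fin N → ℂ) j') * z j') = v * z j := by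
      intro v z
      rw [Finset.sum_eq_single j]
      · simp
      · intro b _ hb; simp [Pi.single_apply, hb]
      · simp
    -- choose v so that the real parts of v * x j and v * y j differ
    obtain ⟨v, hv⟩ : ∃ v : ℂ, (v * (x : Fin N → ℂ) j).re ≠ (v * (y : Fin N → ℂ) j).re := by
      by_cases hre : ((x : Fin N → ℂ) j).re = ((y : Fin N → ℂ) j).re
      · refine ⟨-Complex.I, ?_⟩
        have him : ((x : Fin N → ℂ) j).im ≠ ((y : Fin N → ℂ) j).im := by
          intro h; exact hj (Complex.ext hre h)
        simpa [Complex.mul_re] using him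
      · exact ⟨1, by simpa using hre⟩
    set tx : ℝ := (v * (x : Fin N → ℂ) j).re
    set ty : ℝ := (v * (y : Fin N → ℂ) j).re
    have hd : tx - ty ≠ 0 := sub_ne_zero.mpr hv
    set r : ℝ := Real.pi / (tx - ty)
    set w : Fin N → ℂ := fun j' => ((r : ℝ) : ℂ) * (Pi.single j v : Fin N → ℂ) j'
      with hw
    have hsum : ∀ z : Fin N → ℂ, (∑ j', w j' * z j') = ((r : ℝ) : ℂ) * (v * z j) := by
      intro z
      rw [Finset.sum_eq_single j]
      · simp [hw, Pi.single_apply, mul_assoc]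
      · intro b _ hb; simp [hw, Pi.single_apply, hb]
      · simp
    have hwx : (∑ j', w j' * (x : Fin N → ℂ) j').re = r * tx := by
      rw [hsum, Complex.re_ofReal_mul]
    have hwy : (∑ j', w j' * (y : Fin N → ℂ) j').re = r * ty := by
      rw [hsum, Complex.re_ofReal_mul]
    have hrd : r * tx - r * ty = Real.pi := by
      have : r * tx - r * ty = r * (tx - ty) := by ring
      rw [this]
      exact div_mul_cancel₀ Real.pi hd
    have hne : e w x ≠ e w y := by
      rw [he_apply, he_apply, hwx, hwy]
      intro hcon
      obtain ⟨n, hn⟩ := Complex.exp_eq_exp_iff_exists_int.mp hcon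
      have him := congrArg Complex.im hn
      simp [Complex.mul_im] at him
      -- him : r * tx = r * ty + n * (2 * π)  (some normal form)
      have hn' : Real.pi = (n : ℝ) * (2 * Real.pi) := by linarith [him, hrd]
      have hpi := Real.pi_ne_zero
      have h2 : Real.pi * 1 = Real.pi * ((n : ℝ) * 2) := by linear_combination hn'
      have h3 : (1 : ℝ) = (n : ℝ) * 2 := mul_left_cancel₀ hpi h2
      have h4 : (1 : ℤ) = n * 2 := by exact_mod_cast h3
      omega
    exact ⟨_, ⟨e w, StarAlgebra.subset_adjoin ℂ S ⟨w, rfl⟩, rfl⟩, hne⟩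
  -- Stone–Weierstrass
  have hSW := ContinuousMap.starSubalgebra_topologicalClosure_eq_top_of_separatesPoints B hsep
  set fK : C(K, ℂ) := ⟨fun x => f x, hf.comp continuous_subtype_val⟩ with hfK
  have hmem : fK ∈ closure (B : Set C(K, ℂ)) := by
    have h1 : fK ∈ B.topologicalClosure := by rw [hSW]; trivial
    exact h1
  obtain ⟨g, hgB, hdist⟩ := Metric.mem_closure_iff.mp hmem δ hδ
  -- g is a finite linear combination of exponential characters
  have hgspan : g ∈ Submodule.span ℂ S := by
    have h1 : g ∈ StarAlgebra.adjoin ℂ S := hgB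
    have h2 : g ∈ Algebra.adjoin ℂ (S ∪ star S) := h1
    rw [hstarS] at h2
    have h3 : g ∈ Submodule.span ℂ ((Submonoid.closure S : Submonoid C(K,ℂ)) : Set C(K,ℂ)) := by
      rw [← Algebra.adjoin_eq_span]
      exact h2
    have h4 : Submonoid.closure S = Smon := Submonoid.closure_eq Smon
    rw [h4] at h3
    exact h3
  obtain ⟨n, cc, sf, hsf⟩ := Submodule.mem_span_set'.mp hgspan
  have hWex : ∀ i : Fin n, ∃ w : Fin N → ℂ, e w = (sf i : C(K, ℂ)) := fun i => (sf i).2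
  choose W hW using hWex
  refine ⟨n, cc, W, ?_⟩
  intro x hx
  have hgx : (∑ i, cc i * Complex.exp ((((∑ j, W i j * x j).re : ℝ) : ℂ) * Complex.I))
      = g ⟨x, hx⟩ := by
    rw [← hsf]
    rw [ContinuousMap.sum_apply]
    refine Finset.sum_congr rfl (fun i _ => ?_)
    rw [ContinuousMap.smul_apply, ← hW i, he_apply]
    simp [smul_eq_mul]
  rw [hgx]
  have h1 : ‖g ⟨x, hx⟩ - f x‖ = dist (fK ⟨x, hx⟩) (g ⟨x, hx⟩) := by
    rw [Complex.dist_eq]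
    have : fK ⟨x, hx⟩ = f x := rfl
    rw [this, ← norm_neg]
    congr 1
    ring
  rw [h1]
  exact (ContinuousMap.dist_apply_le_dist _).trans hdist.le


/-- Universal approximation for complex-valued MLP networks with split activation. -/
theorem universal_approximation_complex_MLP
    (ψ : ℝ → ℝ) (hTW : IsTauberWiener ψ)
    (hlim : Tendsto ψ atBot (nhds 0) ∨ Tendsto ψ atTop (nhds 0))
    (ψC : ℂ → ℂ) (hψC : ∀ z : ℂ, ψC z = (ψ z.re : ℂ) + (ψ z.im : ℂ) * Complex.I)
    (N : ℕ) (hN : 1 ≤ N)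
    (K : Set (Fin N → ℂ)) (hK : IsCompact K)
    (f : (Fin N → ℂ) → ℂ) (hf : Continuous f)
    (ε : ℝ) (hε : 0 < ε) :
    ∃ M : ℕ, ∃ α b : Fin M → ℂ, ∃ w : Fin M → Fin N → ℂ,
      ∀ x ∈ K,
        ‖(∑ i, α i * ψC ((∑ j, w i j * x j) + b i)) - f x‖ ≤ ε := by
  have hfA : NetApprox ψC K f := by
    apply netApprox_closure
    intro δ hδ
    obtain ⟨n, c, W, hc⟩ := exists_exp_combo hK f hf δ hδ
    exact ⟨fun x => ∑ i, c i * Complex.exp ((((∑ j, W i j * x j).re : ℝ) : ℂ) * Complex.I),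
      netApprox_sum ψC n _ (fun i => netApprox_exp ψ hTW hlim ψC hψC hK (c i) (W i)), hc⟩
  exact hfA ε hε
end
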